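/- Let K be a field of characteristic 0 and H the q-Heisenberg algebra (case n = 1): the K-algebra generated by x, y, z with relations yx = qxy, zy = qyz, zx = q^{-1}xz + y, where q ∈ K is nonzero. Then the element C = (q² - 1)·xyz - y² is central in H. -/
import Mathlib


/-- The defining relations of the `q`-Heisenberg algebra (case `n = 1`), generated by
`x, y, z` with `yx = qxy`, `zy = qyz`, `zx = q⁻¹xz + y`. -/
inductive HeisRel (K : Type*) [Field K] (q : K) :
    FreeAlgebra K (Fin 3) → FreeAlgebra K (Fin 3) → Prop
  | relyx : HeisRel K q (FreeAlgebra.ι K 1 * FreeAlgebra.ι K 0)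
      (algebraMap K (FreeAlgebra K (Fin 3)) q * (FreeAlgebra.ι K 0 * FreeAlgebra.ι K 1))
  | relzy : HeisRel K q (FreeAlgebra.ι K 2 * FreeAlgebra.ι K 1)
      (algebraMap K (FreeAlgebra K (Fin 3)) q * (FreeAlgebra.ι K 1 * FreeAlgebra.ι K 2))
  | relzx : HeisRel K q (FreeAlgebra.ι K 2 * FreeAlgebra.ι K 0)
      (algebraMap K (FreeAlgebra K (Fin 3)) q⁻¹ * (FreeAlgebra.ι K 0 * FreeAlgebra.ι K 2) +
        FreeAlgebra.ι K 1)

/-- The `q`-Heisenberg algebra (one-variable case). -/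
abbrev Heis (K : Type*) [Field K] (q : K) := RingQuot (HeisRel K q)

noncomputable def Heis.x (K : Type*) [Field K] (q : K) : Heis K q :=
  RingQuot.mkAlgHom K (HeisRel K q) (FreeAlgebra.ι K 0)

noncomputable def Heis.y (K : Type*) [Field K] (q : K) : Heis K q :=
  RingQuot.mkAlgHom K (HeisRel K q) (FreeAlgebra.ι K 1)

noncomputable def Heis.z (K : Type*) [Field K] (q : K) : Heis K q :=
  RingQuot.mkAlgHom K (HeisRel K q) (FreeAlgebra.ι K 2)

section MyAux
variable {K : Type*} [Field K] {q : K}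

lemma heis_yx : Heis.y K q * Heis.x K q = q • (Heis.x K q * Heis.y K q) := by
  have := RingQuot.mkAlgHom_rel K (HeisRel.relyx (K := K) (q := q))
  simpa [Heis.x, Heis.y, Algebra.smul_def] using this

lemma heis_zy : Heis.z K q * Heis.y K q = q • (Heis.y K q * Heis.z K q) := by
  have := RingQuot.mkAlgHom_rel K (HeisRel.relzy (K := K) (q := q))
  simpa [Heis.y, Heis.z, Algebra.smul_def] using this

lemma heis_zx : Heis.z K q * Heis.x K q = q⁻¹ • (Heis.x K q * Heis.z K q) + Heis.y K q := by
  have := RingQuot.mkAlgHom_rel K (HeisRel.relzx (K := K) (q := q))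
  simpa [Heis.x, Heis.y, Heis.z, Algebra.smul_def] using this


lemma yx' (w : Heis K q) : Heis.y K q * (Heis.x K q * w) = q • (Heis.x K q * (Heis.y K q * w)) := by
  rw [← mul_assoc, heis_yx, smul_mul_assoc, mul_assoc]

lemma zy' (w : Heis K q) : Heis.z K q * (Heis.y K q * w) = q • (Heis.y K q * (Heis.z K q * w)) := by
  rw [← mul_assoc, heis_zy, smul_mul_assoc, mul_assoc]

lemma zx' (w : Heis K q) : Heis.z K q * (Heis.x K q * w) =
    q⁻¹ • (Heis.x K q * (Heis.z K q * w)) + Heis.y K q * w := by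
  rw [← mul_assoc, heis_zx, add_mul, smul_mul_assoc, mul_assoc]



set_option maxHeartbeats 1000000 in
lemma commCx (hq : q ≠ 0) :
    Heis.x K q * ((q^2-1) • (Heis.x K q * (Heis.y K q * Heis.z K q)) - Heis.y K q * Heis.y K q)
    = ((q^2-1) • (Heis.x K q * (Heis.y K q * Heis.z K q)) - Heis.y K q * Heis.y K q) * Heis.x K q := by
  simp only [mul_assoc, mul_add, add_mul, mul_sub, sub_mul, mul_smul_comm, smul_mul_assoc,
    smul_add, smul_sub, smul_smul, yx', zy', zx', heis_yx, heis_zy, heis_zx]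
  match_scalars <;> field_simp [hq] <;> try ring

set_option maxHeartbeats 1000000 in
lemma commCy :
    Heis.y K q * ((q^2-1) • (Heis.x K q * (Heis.y K q * Heis.z K q)) - Heis.y K q * Heis.y K q)
    = ((q^2-1) • (Heis.x K q * (Heis.y K q * Heis.z K q)) - Heis.y K q * Heis.y K q) * Heis.y K q := by
  simp only [mul_assoc, mul_add, add_mul, mul_sub, sub_mul, mul_smul_comm, smul_mul_assoc,
    smul_add, smul_sub, smul_smul, yx', zy', zx', heis_yx, heis_zy, heis_zx]

set_option maxHeartbeats 1000000 in
lemma commCz (hq : q ≠ 0) :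
    Heis.z K q * ((q^2-1) • (Heis.x K q * (Heis.y K q * Heis.z K q)) - Heis.y K q * Heis.y K q)
    = ((q^2-1) • (Heis.x K q * (Heis.y K q * Heis.z K q)) - Heis.y K q * Heis.y K q) * Heis.z K q := by
  simp only [mul_assoc, mul_add, add_mul, mul_sub, sub_mul, mul_smul_comm, smul_mul_assoc,
    smul_add, smul_sub, smul_smul, yx', zy', zx', heis_yx, heis_zy, heis_zx]
  match_scalars <;> field_simp [hq] <;> try ring

end MyAux

theorem stmt13 (K : Type*) [Field K] [CharZero K] (q : K) (hq : q ≠ 0) :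
    algebraMap K (Heis K q) (q ^ 2 - 1) * (Heis.x K q * Heis.y K q * Heis.z K q) -
        Heis.y K q ^ 2 ∈
      Subalgebra.center K (Heis K q) := by
  have hC : algebraMap K (Heis K q) (q ^ 2 - 1) * (Heis.x K q * Heis.y K q * Heis.z K q) -
      Heis.y K q ^ 2 =
      (q^2-1) • (Heis.x K q * (Heis.y K q * Heis.z K q)) - Heis.y K q * Heis.y K q := by
    rw [Algebra.smul_def, sq, sq, mul_assoc]
  rw [Subalgebra.mem_center_iff, hC]
  intro b
  obtain ⟨a, rfl⟩ := RingQuot.mkAlgHom_surjective K (HeisRel K q) b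
  induction a using FreeAlgebra.induction with
  | grade0 r =>
      have h0 : (RingQuot.mkAlgHom K (HeisRel K q)) (algebraMap K (FreeAlgebra K (Fin 3)) r)
          = algebraMap K (Heis K q) r := AlgHom.commutes _ r
      rw [h0]
      exact Algebra.commutes r _
  | grade1 i =>
      fin_cases i
      · exact commCx hq
      · exact commCy (K := K) (q := q)
      · exact commCz hq
  | mul a b ha hb =>
      rw [map_mul, mul_assoc, hb, ← mul_assoc, ha, mul_assoc]
  | add a b ha hb =>
      rw [map_add, add_mul, mul_add, ha, hb]
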